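/- Let p be an odd prime, let η be the quadratic character of F_p^×, and let χ be a multiplicative character of F_p^× with χ not equal to the trivial character and χ ≠ η. Then the Jacobi sum J(χ,η) = Σ_{a∈F_p, a≠0, a≠1} χ(a)η(1−a) is not a real number if p ≡ 1 (mod 4), and is not purely imaginary if p ≡ 3 (mod 4). -/
import Mathlib


open Complex

private lemma mulChar_pow_card_sub_one (p : ℕ) [Fact p.Prime] (χ : MulChar (ZMod p) ℂ) :
    χ ^ (p - 1) = 1 := by
  apply MulChar.ext
  intro a
  rw [MulChar.pow_apply_coe, MulChar.one_apply_coe, ← map_pow, ← Units.val_pow_eq_pow_val,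
    ← ZMod.card_units p, pow_card_eq_one, Units.val_one, map_one]

/-- No element of `ℤ[ζ_{p-1}]` squares to `±p`. -/
private lemma jacobiSum_sq_ne (p : ℕ) [Fact p.Prime] (χ η : MulChar (ZMod p) ℂ)
    (ε : ℤ) (hε : ε = 1 ∨ ε = -1) : (jacobiSum χ η) ^ 2 ≠ (ε : ℂ) * p := by
  intro h
  have hp2 : 2 ≤ p := (Fact.out : p.Prime).two_le
  set n := p - 1 with hn
  have hn0 : n ≠ 0 := by omega
  have hnpos : 0 < n := Nat.pos_of_ne_zero hn0
  haveI : NeZero n := ⟨hn0⟩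
  have hμ : IsPrimitiveRoot (Complex.exp (2 * Real.pi * Complex.I / n)) n :=
    Complex.isPrimitiveRoot_exp n hn0
  set μ := Complex.exp (2 * Real.pi * Complex.I / n) with hμdef
  have hμint : IsIntegral ℤ μ := hμ.isIntegral hnpos
  have hJmem : jacobiSum χ η ∈ Algebra.adjoin ℤ {μ} :=
    jacobiSum_mem_algebraAdjoin_of_pow_eq_one (mulChar_pow_card_sub_one p χ)
      (mulChar_pow_card_sub_one p η) hμ
  rw [Algebra.adjoin_singleton_eq_range_aeval] at hJmem
  obtain ⟨f, hf'⟩ := hJmem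
  have hf : Polynomial.aeval μ f = jacobiSum χ η := hf'
  have hdvd : Polynomial.cyclotomic n ℤ ∣ f ^ 2 - Polynomial.C (ε * p) := by
    rw [Polynomial.cyclotomic_eq_minpoly hμ hnpos]
    apply minpoly.isIntegrallyClosed_dvd hμint
    rw [map_sub, map_pow, hf, Polynomial.aeval_C, h]
    simp only [eq_intCast]
    push_cast
    ring
  have hmap : Polynomial.cyclotomic n (ZMod p) ∣ (f.map (Int.castRingHom (ZMod p))) ^ 2 := by
    have H := Polynomial.map_dvd (Int.castRingHom (ZMod p)) hdvd
    rwa [Polynomial.map_cyclotomic, Polynomial.map_sub, Polynomial.map_pow, Polynomial.map_C,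
      show (Int.castRingHom (ZMod p)) (ε * p) = 0 by
        simp [ZMod.natCast_self],
      Polynomial.C_0, sub_zero] at H
  haveI : NeZero ((n : ZMod p)) := by
    refine ⟨?_⟩
    have hcast : ((n : ℕ) : ZMod p) = -1 := by
      rw [hn, Nat.cast_sub (by omega : 1 ≤ p), ZMod.natCast_self, Nat.cast_one, zero_sub]
    rw [hcast]
    exact neg_ne_zero.mpr one_ne_zero
  have hsq : Squarefree (Polynomial.cyclotomic n (ZMod p)) :=
    Squarefree.squarefree_of_dvd (Polynomial.cyclotomic.dvd_X_pow_sub_one n (ZMod p))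
      ((Polynomial.X_pow_sub_one_separable_iff.mpr (NeZero.natCast_ne n (ZMod p))).squarefree)
  have hfd : Polynomial.cyclotomic n (ZMod p) ∣ f.map (Int.castRingHom (ZMod p)) :=
    (hsq.dvd_pow_iff_dvd two_ne_zero).mp hmap
  obtain ⟨q, hq⟩ := hfd
  obtain ⟨Q, hQ⟩ := Polynomial.map_surjective (Int.castRingHom (ZMod p)) (by exact ZMod.intCast_surjective) q
  have hCp : Polynomial.C (p : ℤ) ∣ f - Polynomial.cyclotomic n ℤ * Q := by
    rw [Polynomial.C_dvd_iff_dvd_coeff]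
    intro i
    rw [← ZMod.intCast_zmod_eq_zero_iff_dvd]
    have hzero : (f - Polynomial.cyclotomic n ℤ * Q).map (Int.castRingHom (ZMod p)) = 0 := by
      rw [Polynomial.map_sub, Polynomial.map_mul, Polynomial.map_cyclotomic, hQ, ← hq, sub_self]
    calc ((f - Polynomial.cyclotomic n ℤ * Q).coeff i : ZMod p)
        = ((f - Polynomial.cyclotomic n ℤ * Q).map (Int.castRingHom (ZMod p))).coeff i := by
          rw [Polynomial.coeff_map]; rfl
      _ = 0 := by rw [hzero, Polynomial.coeff_zero]
  obtain ⟨R, hR⟩ := hCp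
  have hcycμ : Polynomial.aeval μ (Polynomial.cyclotomic n ℤ) = 0 := by
    rw [Polynomial.cyclotomic_eq_minpoly hμ hnpos]
    exact minpoly.aeval ℤ μ
  have hJp : jacobiSum χ η = (p : ℂ) * Polynomial.aeval μ R := by
    have hfe : f = Polynomial.cyclotomic n ℤ * Q + Polynomial.C (p : ℤ) * R := by
      linear_combination hR
    rw [← hf, hfe, map_add, map_mul, map_mul, hcycμ, zero_mul, zero_add, Polynomial.aeval_C]
    simp only [eq_intCast]
    push_cast
    ring
  set α := Polynomial.aeval μ R with hα
  have hαint : IsIntegral ℤ α := by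
    have hmem : α ∈ Algebra.adjoin ℤ {μ} := by
      rw [Algebra.adjoin_singleton_eq_range_aeval]
      exact ⟨R, rfl⟩
    have hle : Algebra.adjoin ℤ {μ} ≤ integralClosure ℤ ℂ := by
      apply Algebra.adjoin_le
      intro x hx
      rw [Set.mem_singleton_iff] at hx
      rw [hx]
      exact hμint
    exact hle hmem
  have hpne : (p : ℂ) ≠ 0 := Nat.cast_ne_zero.mpr (by omega)
  have hα2 : (α ^ 2 : ℂ) = algebraMap ℚ ℂ ((ε : ℚ) / p) := by
    have h1 : (p : ℂ) ^ 2 * α ^ 2 = (ε : ℂ) * p := by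
      rw [← h, hJp]; ring
    have h2 : algebraMap ℚ ℂ ((ε : ℚ) / p) = (ε : ℂ) / p := by
      simp only [eq_ratCast]
      push_cast
      ring
    rw [h2, eq_div_iff hpne]
    apply mul_left_cancel₀ hpne
    calc (p : ℂ) * (α ^ 2 * p) = (p : ℂ) ^ 2 * α ^ 2 := by ring
      _ = (ε : ℂ) * p := h1
      _ = (p : ℂ) * ε := by ring
  have hint2 : IsIntegral ℤ ((ε : ℚ) / p) := by
    have := hαint.pow 2
    rw [hα2] at this
    exact (isIntegral_algebraMap_iff (algebraMap ℚ ℂ).injective).mp this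
  obtain ⟨y, hy⟩ := IsIntegrallyClosed.isIntegral_iff.mp hint2
  have hyq : (y : ℚ) * p = ε := by
    have hpq : (p : ℚ) ≠ 0 := Nat.cast_ne_zero.mpr (by omega)
    rw [show algebraMap ℤ ℚ y = (y : ℚ) from rfl] at hy
    field_simp at hy
    linarith [hy]
  have hyz : y * (p : ℤ) = ε := by exact_mod_cast hyq
  have hpd : (p : ℤ) ∣ 1 := by
    rcases hε with rfl | rfl
    · exact ⟨y, by linarith⟩
    · exact (dvd_neg).mp ⟨y, by linarith⟩
  have := Int.le_of_dvd one_pos hpd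
  omega

private lemma conj_jacobiSum (p : ℕ) [Fact p.Prime] (χ η : MulChar (ZMod p) ℂ) :
    (starRingEnd ℂ) (jacobiSum χ η) = jacobiSum χ⁻¹ η⁻¹ := by
  simp only [jacobiSum, map_sum, map_mul]
  refine Finset.sum_congr rfl fun x _ => ?_
  rw [starRingEnd_apply, starRingEnd_apply, MulChar.star_apply', MulChar.star_apply']

/-- For an odd prime `p`, the quadratic character `η` of `F_p^×`, and a multiplicative
character `χ` of `F_p^×` with `χ` neither trivial nor equal to `η`, the Jacobi sum
`J(χ,η) = Σ_{a ≠ 0, 1} χ(a)η(1-a)` is not real when `p ≡ 1 (mod 4)` and is not purely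
imaginary when `p ≡ 3 (mod 4)`. -/
theorem jacobi_sum_not_real_or_imaginary (p : ℕ) [Fact p.Prime] (hp : p ≠ 2)
    (χ η : MulChar (ZMod p) ℂ)
    (hη : ∀ a : ZMod p, a ≠ 0 → η a = if IsSquare a then 1 else -1)
    (hχ1 : χ ≠ 1) (hχη : χ ≠ η)
    (J : ℂ)
    (hJ : J = ∑ a ∈ Finset.univ.filter (fun a : ZMod p => a ≠ 0 ∧ a ≠ 1),
      χ a * η (1 - a)) :
    (p % 4 = 1 → J.im ≠ 0) ∧ (p % 4 = 3 → J.re ≠ 0) := by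
  have hp2 : 2 ≤ p := (Fact.out : p.Prime).two_le
  -- η is nontrivial
  have hchar2 : ringChar (ZMod p) ≠ 2 := by rw [ZMod.ringChar_zmod_n]; exact hp
  obtain ⟨b, hb⟩ := FiniteField.exists_nonsquare hchar2
  have hb0 : b ≠ 0 := fun h => hb (h ▸ ⟨0, (mul_zero 0).symm⟩)
  have hη1 : η ≠ 1 := by
    intro h
    have hub : IsUnit b := isUnit_iff_ne_zero.mpr hb0
    have h1 : η b = 1 := by
      rw [h, ← hub.unit_spec, MulChar.one_apply_coe]
    rw [hη b hb0, if_neg hb] at h1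
    norm_num at h1
  -- η has order 2 pointwise
  have hη2 : ∀ a : ZMod p, a ≠ 0 → η a * η a = 1 := by
    intro a ha
    rw [hη a ha]
    split <;> norm_num
  have hχη1 : χ * η ≠ 1 := by
    intro h
    apply hχη
    apply MulChar.ext
    intro u
    have h1 : χ ↑u * η ↑u = 1 := by
      have := congrArg (fun ψ : MulChar (ZMod p) ℂ => ψ ↑u) h
      simpa [MulChar.one_apply_coe] using this
    have h2 := hη2 ↑u (Units.ne_zero u)
    calc χ ↑u = χ ↑u * (η ↑u * η ↑u) := by rw [h2, mul_one]
    _ = (χ ↑u * η ↑u) * η ↑u := by ring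
    _ = η ↑u := by rw [h1, one_mul]
  -- identify J with the Jacobi sum
  have hJeq : J = jacobiSum χ η := by
    rw [hJ, jacobiSum_eq_sum_sdiff]
    apply Finset.sum_congr _ (fun _ _ => rfl)
    ext a
    simp only [Finset.mem_filter, Finset.mem_univ, true_and, Finset.mem_sdiff,
      Finset.mem_insert, Finset.mem_singleton, not_or]
  have hrc : ringChar ℂ ≠ ringChar (ZMod p) := by
    rw [ringChar.eq_zero, ZMod.ringChar_zmod_n]
    omega
  have hmulJ : jacobiSum χ η * jacobiSum χ⁻¹ η⁻¹ = (p : ℂ) := by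
    rw [jacobiSum_mul_jacobiSum_inv hrc hχ1 hη1 hχη1, ZMod.card]
  constructor
  · intro _ him
    have hc : (starRingEnd ℂ) J = J := Complex.conj_eq_iff_im.mpr him
    have hsq : (jacobiSum χ η) ^ 2 = ((1 : ℤ) : ℂ) * p := by
      calc (jacobiSum χ η) ^ 2 = jacobiSum χ η * ((starRingEnd ℂ) (jacobiSum χ η)) := by
            rw [← hJeq, hc, sq]
        _ = jacobiSum χ η * jacobiSum χ⁻¹ η⁻¹ := by rw [conj_jacobiSum]
        _ = ((1 : ℤ) : ℂ) * p := by rw [hmulJ]; push_cast; ring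
    exact jacobiSum_sq_ne p χ η 1 (Or.inl rfl) hsq
  · intro _ hre
    have hc : (starRingEnd ℂ) J = -J := by
      apply Complex.ext <;> simp [hre]
    have hsq : (jacobiSum χ η) ^ 2 = ((-1 : ℤ) : ℂ) * p := by
      have : jacobiSum χ η * jacobiSum χ⁻¹ η⁻¹ = -(jacobiSum χ η) ^ 2 := by
        rw [← conj_jacobiSum, ← hJeq, hc]; ring
      rw [this] at hmulJ
      push_cast
      linear_combination -hmulJ
    exact jacobiSum_sq_ne p χ η (-1) (Or.inr rfl) hsq
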